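/- Let G be a group with a choice of generators w ↦ w̄ from W whose gross cogrowth satisfies θ < 1 (i.e., G is non-amenable). Then for every ε > 0 and every constant K ∈ ℝ, the set U = { w ∈ W : |w̄| > ((1−θ)/θ − ε)·|w| + K } is exponentially generic. -/

import Mathlib

open Filter

namespace GenericSubgroups

/-- A word over the alphabet `Fin m × Bool` (generator index, with `true` = formal inverse). -/
abbrev Word (m : ℕ) := List (Fin m × Bool)

/-- The disk of radius `n` : words of length at most `n`. -/
def ball (m n : ℕ) : Set (Word m) := {w | w.length ≤ n}

/-- The sphere of radius `n` : words of length exactly `n`. -/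
def sphere (m n : ℕ) : Set (Word m) := {w | w.length = n}

/-- A set of words is exponentially negligible. -/
def ExpNegligible {m : ℕ} (X : Set (Word m)) : Prop :=
  ∃ α : ℝ, 0 < α ∧ α < 1 ∧
    ∀ᶠ n in atTop, ((X ∩ ball m n).ncard : ℝ) / ((ball m n).ncard : ℝ) ≤ α ^ n

/-- A set of words is exponentially generic if its complement is exponentially negligible. -/
def ExpGeneric {m : ℕ} (X : Set (Word m)) : Prop := ExpNegligible Xᶜ

/-- Disk of radius `n` in the set of `k`-tuples of words. -/
def ballK (m k n : ℕ) : Set (Fin k → Word m) := {w | ∀ i, (w i).length ≤ n}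

def ExpNegligibleK {m k : ℕ} (X : Set (Fin k → Word m)) : Prop :=
  ∃ α : ℝ, 0 < α ∧ α < 1 ∧
    ∀ᶠ n in atTop, ((X ∩ ballK m k n).ncard : ℝ) / ((ballK m k n).ncard : ℝ) ≤ α ^ n

def ExpGenericK {m k : ℕ} (X : Set (Fin k → Word m)) : Prop := ExpNegligibleK Xᶜ

variable {G : Type*} [Group G]

/-- Evaluation of a word in `G`, determined by the family `g` of generators. -/
def eval {m : ℕ} (g : Fin m → G) (w : Word m) : G :=
  (w.map (fun p => if p.2 then (g p.1)⁻¹ else g p.1)).prod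

/-- Word length of an element of `G`. -/
noncomputable def wlen {m : ℕ} (g : Fin m → G) (x : G) : ℕ :=
  sInf {n | ∃ w : Word m, w.length = n ∧ eval g w = x}

/-- Word metric on `G`. -/
noncomputable def wdist {m : ℕ} (g : Fin m → G) (x y : G) : ℕ := wlen g (x⁻¹ * y)

/-- Words of length exactly `n` representing the identity. -/
def V {m : ℕ} (g : Fin m → G) (n : ℕ) : Set (Word m) :=
  {w | w.length = n ∧ eval g w = 1}

/-- The gross cogrowth `θ = limsup (1/n) log_{2m} |V_n|`. -/
noncomputable def cogrowth {m : ℕ} (g : Fin m → G) : ℝ :=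
  limsup (fun n : ℕ => Real.logb (2 * m : ℝ) ((V g n).ncard : ℝ) / (n : ℝ)) atTop

/-- The four-point (quadrilateral) condition with constant `δ` for the word metric. -/
def FourPoint {m : ℕ} (g : Fin m → G) (δ : ℝ) : Prop :=
  ∀ p q r s : G,
    (wdist g p s : ℝ) + (wdist g q r : ℝ) ≤
      2 * δ + max ((wdist g p q : ℝ) + (wdist g r s : ℝ)) ((wdist g p r : ℝ) + (wdist g q s : ℝ))

/-- The Gromov product `(x|y)_1` with respect to the word metric. -/
noncomputable def gp {m : ℕ} (g : Fin m → G) (x y : G) : ℝ :=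
  ((wlen g x : ℝ) + (wlen g y : ℝ) - (wlen g (x⁻¹ * y) : ℝ)) / 2

/-- `x^e` where `e : Bool`, `true` meaning inverse. -/
def powB (x : G) (e : Bool) : G := if e then x⁻¹ else x

/-- Formal inverse of a word. -/
def winv {m : ℕ} (w : Word m) : Word m := (w.reverse).map (fun p => (p.1, !p.2))

/-!
If `w` has length `k` and `w̄` has word length `ℓ`, then `w` followed by the formal inverse of
a geodesic word for `w̄` is a relation of length `k + ℓ` with prefix `w`. Hence the words of
length at most `n` with `|w̄| ≤ s|w| + K` number at most `(n + 1)²` times the largest `|V_j|`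
with `j ≤ (1 + s)n + K`, which is `O((2m)^(θ'((1 + s)n + K)))` for any `θ' > θ`. With
`s = (1 - θ)/θ - ε` one has `θ(1 + s) = 1 - θε < 1`, so `θ'` can be taken with
`θ'(1 + s) < 1`, and the proportion of such words in `W_n`, of size at least `(2m)^n`,
decays exponentially.
-/

section Words

variable {m : ℕ} (g : Fin m → G)

lemma eval_append (w u : Word m) : eval g (w ++ u) = eval g w * eval g u := by
  simp [eval]

lemma length_winv (w : Word m) : (winv w).length = w.length := by
  simp [winv]

lemma eval_winv (w : Word m) : eval g (winv w) = (eval g w)⁻¹ := by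
  simp only [eval, winv, List.prod_inv_reverse, List.map_reverse, List.map_map]
  congr 2
  refine List.map_congr_left fun ⟨a, e⟩ _ => ?_
  cases e <;> simp

lemma wlen_eval_le_length (w : Word m) : wlen g (eval g w) ≤ w.length :=
  Nat.sInf_le ⟨w, rfl, rfl⟩

lemma exists_length_eq_wlen_eval (w : Word m) :
    ∃ u : Word m, u.length = wlen g (eval g w) ∧ eval g u = eval g w :=
  Nat.sInf_mem (s := {n | ∃ u : Word m, u.length = n ∧ eval g u = eval g w}) ⟨_, w, rfl, rfl⟩

end Words

lemma sphere_finite (m n : ℕ) : (sphere m n).Finite := List.finite_length_eq _ n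

lemma ncard_sphere (m n : ℕ) : (sphere m n).ncard = (2 * m) ^ n := by
  have e : sphere m n ≃ List.Vector (Fin m × Bool) n := Equiv.subtypeEquivRight fun _ => Iff.rfl
  rw [← Nat.card_coe_set_eq, Nat.card_congr e, Nat.card_eq_fintype_card, card_vector]
  simp [mul_comm]

lemma pow_le_ncard_ball (m n : ℕ) : (2 * m) ^ n ≤ (ball m n).ncard := by
  rw [← ncard_sphere m n]
  exact Set.ncard_le_ncard (fun w hw => le_of_eq hw) (List.finite_length_le _ n)

lemma ncard_V_le {m : ℕ} (g : Fin m → G) (n : ℕ) : (V g n).ncard ≤ (2 * m) ^ n := by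
  rw [← ncard_sphere m n]
  exact Set.ncard_le_ncard (fun w hw => hw.1) (sphere_finite m n)

lemma ncard_length_wlen_eq_le {m : ℕ} (g : Fin m → G) (k ℓ : ℕ) :
    {w : Word m | w.length = k ∧ wlen g (eval g w) = ℓ}.ncard ≤ (V g (k + ℓ)).ncard := by
  choose geo hlen heval using exists_length_eq_wlen_eval g
  refine Set.ncard_le_ncard_of_injOn (fun w => w ++ winv (geo w)) ?_ ?_
    ((sphere_finite m _).subset fun w hw => hw.1)
  · rintro w ⟨hk, hℓ⟩
    refine ⟨by simp [length_winv, hlen, hk, hℓ], ?_⟩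
    rw [eval_append, eval_winv, heval, mul_inv_cancel]
  · rintro w₁ ⟨hk₁, -⟩ w₂ ⟨hk₂, -⟩ h
    exact (List.append_inj h (hk₁.trans hk₂.symm)).1

open Finset in
lemma ncard_ball_inter_length_add_wlen_le {m : ℕ} (g : Fin m → G) {J B : ℝ} (hB₀ : 0 ≤ B)
    (hB : ∀ j : ℕ, (j : ℝ) ≤ J → ((V g j).ncard : ℝ) ≤ B) (n : ℕ) :
    ((ball m n ∩ {w | (w.length : ℝ) + wlen g (eval g w) ≤ J}).ncard : ℝ) ≤ (n + 1) ^ 2 * B := by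
  classical
  set P := (range (n + 1) ×ˢ range (n + 1)).filter fun p : ℕ × ℕ => (p.1 : ℝ) + p.2 ≤ J
  set S : ℕ × ℕ → Set (Word m) := fun p => {w | w.length = p.1 ∧ wlen g (eval g w) = p.2}
  have hcover : ball m n ∩ {w | (w.length : ℝ) + wlen g (eval g w) ≤ J} ⊆ ⋃ p ∈ P, S p := by
    rintro w ⟨hn, hJ⟩
    have hℓ := (wlen_eval_le_length g w).trans hn
    exact Set.mem_biUnion (x := (w.length, wlen g (eval g w)))
      (mem_filter.mpr ⟨mem_product.mpr ⟨mem_range_succ_iff.mpr hn, mem_range_succ_iff.mpr hℓ⟩, hJ⟩)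
      ⟨rfl, rfl⟩
  have hfinite : (⋃ p ∈ P, S p).Finite :=
    P.finite_toSet.biUnion fun p _ => (sphere_finite m p.1).subset fun w hw => hw.1
  have hS : ∀ p ∈ P, ((S p).ncard : ℝ) ≤ B := fun p hp =>
    (Nat.cast_le.mpr (ncard_length_wlen_eq_le g p.1 p.2)).trans
      (hB _ (by push_cast; exact (mem_filter.mp hp).2))
  have hcard : (P.card : ℝ) ≤ (n + 1) ^ 2 := by
    exact_mod_cast (card_filter_le _ _).trans (by simp [sq])
  calc ((ball m n ∩ {w | (w.length : ℝ) + wlen g (eval g w) ≤ J}).ncard : ℝ)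
      ≤ ∑ p ∈ P, ((S p).ncard : ℝ) := by
        exact_mod_cast (Set.ncard_le_ncard hcover hfinite).trans (P.set_ncard_biUnion_le S)
    _ ≤ P.card * B := by simpa using sum_le_sum hS
    _ ≤ (n + 1) ^ 2 * B := mul_le_mul_of_nonneg_right hcard hB₀

lemma exists_forall_le_mul_rpow_of_limsup_lt {a : ℕ → ℕ} {b θ : ℝ} (hb : 1 < b) (hθ : 0 ≤ θ)
    (ha : ∀ n, (a n : ℝ) ≤ b ^ n)
    (hlim : limsup (fun n : ℕ => Real.logb b (a n) / n) atTop < θ) :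
    ∃ C, 0 < C ∧ ∀ n : ℕ, (a n : ℝ) ≤ C * b ^ (θ * n) := by
  have hlogb : ∀ n : ℕ, 0 < a n → Real.logb b (a n) ≤ n := fun n hn => by
    rw [Real.logb_le_iff_le_rpow hb (by exact_mod_cast hn), Real.rpow_natCast]
    exact ha n
  have hbdd : IsBoundedUnder (· ≤ ·) atTop fun n : ℕ => Real.logb b (a n) / n := by
    refine isBoundedUnder_of ⟨1, fun n => div_le_one_of_le₀ ?_ n.cast_nonneg⟩
    rcases (a n).eq_zero_or_pos with h | h
    · simp [h]
    · exact hlogb n h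
  obtain ⟨N, hN⟩ := eventually_atTop.mp (eventually_lt_of_limsup_lt hlim hbdd)
  have hb₀ : 0 < b := one_pos.trans hb
  refine ⟨b ^ N, pow_pos hb₀ N, fun n => ?_⟩
  have hone : 1 ≤ b ^ (θ * n) := Real.one_le_rpow hb.le (by positivity)
  rcases lt_or_ge n N with hn | hn
  · calc (a n : ℝ) ≤ b ^ n := ha n
      _ ≤ b ^ N := pow_le_pow_right₀ hb.le hn.le
      _ ≤ b ^ N * b ^ (θ * n) := le_mul_of_one_le_right (pow_pos hb₀ N).le hone
  · refine le_trans ?_ (le_mul_of_one_le_left (by positivity) (one_le_pow₀ hb.le))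
    rcases (a n).eq_zero_or_pos with h | h
    · rw [h, Nat.cast_zero]; positivity
    rcases n.eq_zero_or_pos with hn0 | hn0
    · simpa [hn0] using ha 0
    rw [← Real.logb_le_iff_le_rpow hb (by exact_mod_cast h)]
    have := hN n hn
    rw [div_lt_iff₀ (by exact_mod_cast hn0)] at this
    exact this.le

lemma exists_eventually_le_pow_of_le_mul_pow {u : ℕ → ℝ} {C γ : ℝ} {d : ℕ} (hγ₀ : 0 ≤ γ)
    (hγ₁ : γ < 1) (hu : ∀ n : ℕ, u n ≤ C * (n + 1) ^ d * γ ^ n) :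
    ∃ α, 0 < α ∧ α < 1 ∧ ∀ᶠ n in atTop, u n ≤ α ^ n := by
  obtain ⟨α, hγα, hα₁⟩ := exists_between hγ₁
  have hα₀ : 0 < α := hγ₀.trans_lt hγα
  have hr : |γ / α| < 1 := by
    rwa [abs_of_nonneg (by positivity), div_lt_one hα₀]
  have hsmall : ∀ᶠ n : ℕ in atTop, |C| * 2 ^ d * ((n : ℝ) ^ d * (γ / α) ^ n) ≤ 1 :=
    ((tendsto_pow_const_mul_const_pow_of_abs_lt_one d hr).const_mul _).eventually_le_const
      (by simp)
  refine ⟨α, hα₀, hα₁, ?_⟩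
  filter_upwards [hsmall, eventually_ge_atTop 1] with n hn hn1
  have hn1' : (1 : ℝ) ≤ n := by exact_mod_cast hn1
  calc u n ≤ C * (n + 1) ^ d * γ ^ n := hu n
    _ ≤ |C| * (2 * n) ^ d * γ ^ n := by
        gcongr
        · exact le_abs_self C
        · linarith
    _ = |C| * 2 ^ d * ((n : ℝ) ^ d * (γ / α) ^ n) * α ^ n := by
        rw [div_pow, mul_pow]; field_simp
    _ ≤ α ^ n := by simpa using mul_le_mul_of_nonneg_right hn (pow_nonneg hα₀.le n)

lemma exists_max_zero_lt_and_mul_lt_one {θ ε : ℝ} (hθ : θ < 1) (hε : 0 < ε) :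
    ∃ θ', max θ 0 < θ' ∧ θ' * (1 + max ((1 - θ) / θ - ε) 0) < 1 := by
  have hc : 0 < 1 + max ((1 - θ) / θ - ε) 0 := by positivity
  suffices h : max θ 0 * (1 + max ((1 - θ) / θ - ε) 0) < 1 by
    obtain ⟨θ', h₁, h₂⟩ := exists_between ((lt_div_iff₀ hc).mpr h)
    exact ⟨θ', h₁, (lt_div_iff₀ hc).mp h₂⟩
  rcases le_or_gt ((1 - θ) / θ - ε) 0 with hs | hs
  · simpa [max_eq_right hs] using hθ
  have hθ₀ : 0 < θ := by
    by_contra! h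
    have : (1 - θ) / θ ≤ 0 := div_nonpos_of_nonneg_of_nonpos (by linarith) h
    linarith
  rw [max_eq_left hθ₀.le, max_eq_left hs.le, mul_add, mul_one, mul_sub, mul_div_cancel₀ _ hθ₀.ne']
  nlinarith

lemma ncard_wlen_le_inter_ball_div_le {m : ℕ} (hm : 1 ≤ m) (g : Fin m → G) {s K θ C : ℝ}
    (hθ : 0 ≤ θ) (hC : 0 ≤ C) (hV : ∀ j : ℕ, ((V g j).ncard : ℝ) ≤ C * (2 * m) ^ (θ * j))
    (n : ℕ) :
    (({w : Word m | (wlen g (eval g w) : ℝ) ≤ s * w.length + K} ∩ ball m n).ncard : ℝ) /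
        (ball m n).ncard ≤
      C * (2 * m) ^ (θ * |K|) * (n + 1) ^ 2 * ((2 * m) ^ (θ * (1 + max s 0) - 1)) ^ n := by
  set b : ℝ := 2 * m
  have hb : 1 ≤ b := by
    have : (1 : ℝ) ≤ m := by exact_mod_cast hm
    linarith
  have hb₀ : 0 < b := one_pos.trans_le hb
  set J := (1 + max s 0) * n + |K|
  have hsub : {w : Word m | (wlen g (eval g w) : ℝ) ≤ s * w.length + K} ∩ ball m n ⊆
      ball m n ∩ {w | (w.length : ℝ) + wlen g (eval g w) ≤ J} := by
    rintro w ⟨hw, hn⟩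
    refine ⟨hn, ?_⟩
    have hn' : (w.length : ℝ) ≤ n := by exact_mod_cast hn
    have hw' : (wlen g (eval g w) : ℝ) ≤ max s 0 * n + |K| := hw.out.trans <|
      add_le_add (mul_le_mul (le_max_left s 0) hn' w.length.cast_nonneg (le_max_right s 0))
        (le_abs_self K)
    change (w.length : ℝ) + wlen g (eval g w) ≤ (1 + max s 0) * n + |K|
    linarith
  have hcount := ncard_ball_inter_length_add_wlen_le g (J := J) (B := C * b ^ (θ * J))
    (by positivity) (fun j hj => (hV j).trans (by gcongr)) n
  have hball : b ^ n ≤ (ball m n).ncard := by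
    simp only [b]; exact_mod_cast pow_le_ncard_ball m n
  have hpow : b ^ (θ * J) / b ^ n = b ^ (θ * |K|) * (b ^ (θ * (1 + max s 0) - 1)) ^ n := by
    rw [← Real.rpow_natCast b n, ← Real.rpow_natCast _ n, ← Real.rpow_mul hb₀.le,
      ← Real.rpow_sub hb₀, ← Real.rpow_add hb₀]
    congr 1
    ring
  calc _ ≤ (n + 1) ^ 2 * (C * b ^ (θ * J)) / b ^ n := by
        gcongr
        exact (Nat.cast_le.mpr (Set.ncard_le_ncard hsub ((List.finite_length_le _ n).subset
          Set.inter_subset_left))).trans hcount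
    _ = C * b ^ (θ * |K|) * (n + 1) ^ 2 * (b ^ (θ * (1 + max s 0) - 1)) ^ n := by
        rw [mul_div_assoc, mul_div_assoc, hpow]
        ring

theorem generic_word_length_lower_bound_general (m : ℕ) (hm : 2 ≤ m) {G : Type*} [Group G]
    (g : Fin m → G)
    (hθ : cogrowth g < 1) (ε K : ℝ) (hε : 0 < ε) :
    ExpGeneric {w : Word m |
      ((1 - cogrowth g) / cogrowth g - ε) * (w.length : ℝ) + K < (wlen g (eval g w) : ℝ)} := by
  set θ := cogrowth g
  set s := (1 - θ) / θ - ε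
  have hb : (1 : ℝ) < 2 * m := by
    have : (2 : ℝ) ≤ m := by exact_mod_cast hm
    linarith
  obtain ⟨θ', hθθ', hθ'⟩ := exists_max_zero_lt_and_mul_lt_one hθ hε
  have hθ'₀ : 0 ≤ θ' := (le_max_right θ 0).trans hθθ'.le
  obtain ⟨C, hC, hV⟩ := exists_forall_le_mul_rpow_of_limsup_lt (a := fun n => (V g n).ncard) hb
    hθ'₀ (fun n => by exact_mod_cast ncard_V_le g n) ((le_max_left θ 0).trans_lt hθθ')
  obtain ⟨α, hα₀, hα₁, hα⟩ := exists_eventually_le_pow_of_le_mul_pow (by positivity)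
    (Real.rpow_lt_one_of_one_lt_of_neg hb (by linarith))
    (ncard_wlen_le_inter_ball_div_le (by omega) g (s := s) (K := K) hθ'₀ hC.le hV)
  refine ⟨α, hα₀, hα₁, ?_⟩
  simpa only [Set.compl_ofPred, not_lt] using hα

/-- Lemma `amenable`: if `G` is non-amenable (`θ < 1`), then for every
`ε > 0` and constant `K`, the set `U = {w : |w̄| > ((1-θ)/θ - ε)|w| + K}` is
exponentially generic. -/
theorem generic_word_length_lower_bound (m : ℕ) (hm : 2 ≤ m) {G : Type*} [Group G]
    (g : Fin m → G) (hsurj : Function.Surjective (eval g))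
    (hθ : cogrowth g < 1) (ε K : ℝ) (hε : 0 < ε) :
    ExpGeneric {w : Word m |
      ((1 - cogrowth g) / cogrowth g - ε) * (w.length : ℝ) + K < (wlen g (eval g w) : ℝ)} :=
  generic_word_length_lower_bound_general m hm g hθ ε K hε

end GenericSubgroups
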